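/- Let H be a finite group with [H,H] ⊆ Z(H), set Z = [H,H], let χ be a faithful linear character of Z, and set m = √(|H : Z(H)|). Then for every linear character φ of Z(H) whose restriction to Z equals χ, the induced character φ↑^H equals m·τ_φ for some irreducible character τ_φ of H of degree τ_φ(1) = m; in particular m is a positive integer. -/

import Mathlib

/-!
The functions on `H` on which `Z(H)` acts through `φ` under right translation form a nonzero
subrepresentation of the regular representation; take an irreducible piece `ρ` of it, of degree
`n`, so that `Z(H)` acts on `ρ` by the scalars `φ`. For `g ∉ Z(H)` pick `x` not commuting with
`g`: then `x⁻¹ g x = g c` with `c = ⁅g⁻¹, x⁻¹⁆` a nontrivial commutator, so the character `τ` of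
`ρ` satisfies `τ g = τ (x⁻¹ g x) = φ c • τ g` with `φ c = χ c ≠ 1`, and `τ` vanishes off `Z(H)`.
Orthogonality `⟨τ, τ⟩ = 1` then reads `|Z(H)| n² = |H|`, and `φ↑^H`, which is `|H : Z(H)| φ` on
`Z(H)` and `0` elsewhere, equals `n τ`.
-/

open scoped Classical

/-- The character of `H` induced from a linear character `φ` of the center `Z(H)`:
`φ↑^H(g) = |Z(H)|⁻¹ Σ_{x ∈ H, x⁻¹gx ∈ Z(H)} φ(x⁻¹gx)`. -/
noncomputable def inducedFromCenter (H : Type*) [Group H] [Fintype H]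
    (φ : ↥(Subgroup.center H) →* ℂˣ) (g : H) : ℂ :=
  (Nat.card ↥(Subgroup.center H) : ℂ)⁻¹ *
    ∑ x : H, if h : x⁻¹ * g * x ∈ Subgroup.center H then (φ ⟨x⁻¹ * g * x, h⟩ : ℂ) else 0

namespace Representation

section Monoid

variable {k G V W : Type*} [Field k] [Monoid G] [AddCommGroup V] [Module k V]
  [AddCommGroup W] [Module k W]

theorem isIrreducible_iff_submodule (ρ : Representation k G V) :
    ρ.IsIrreducible ↔ Nontrivial V ∧
      ∀ U : Submodule k V, (∀ g, ∀ v ∈ U, ρ g v ∈ U) → U = ⊥ ∨ U = ⊤ := by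
  have bot_ne_top : (⊥ : Subrepresentation ρ) ≠ ⊤ ↔ Nontrivial V := by
    rw [← Submodule.nontrivial_iff k, ← not_subsingleton_iff_nontrivial,
      ← subsingleton_iff_bot_eq_top, Ne, Subrepresentation.ext_iff]
    rfl
  constructor
  · intro _
    refine ⟨bot_ne_top.1 IsSimpleOrder.bot_ne_top, fun U hU => ?_⟩
    exact (IsSimpleOrder.eq_bot_or_eq_top (⟨U, hU⟩ : Subrepresentation ρ)).imp
      (congrArg Subrepresentation.toSubmodule) (congrArg Subrepresentation.toSubmodule)
  · rintro ⟨hV, h⟩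
    have := nontrivial_of_ne ⊥ ⊤ (bot_ne_top.2 hV)
    refine ⟨fun σ => ?_⟩
    simp only [Subrepresentation.ext_iff]
    exact h σ.toSubmodule σ.apply_mem_toSubmodule

theorem isIrreducible_toRepresentation_of_isAtom {ρ : Representation k G V}
    {σ : Subrepresentation ρ} (hσ : IsAtom σ) : σ.toRepresentation.IsIrreducible := by
  rw [isIrreducible_iff_submodule]
  have hne : σ.toSubmodule ≠ ⊥ := fun h => hσ.1 (Subrepresentation.ext h)
  refine ⟨Submodule.nontrivial_iff_ne_bot.2 hne, fun U hU => ?_⟩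
  let τ : Subrepresentation ρ :=
    ⟨U.map σ.toSubmodule.subtype, by
      rintro g _ ⟨u, hu, rfl⟩
      exact ⟨_, hU g u hu, rfl⟩⟩
  have hτ : τ ≤ σ := by
    rintro _ ⟨u, -, rfl⟩
    exact u.2
  have hinj := Submodule.map_injective_of_injective σ.toSubmodule.injective_subtype
  refine (hσ.le_iff.1 hτ).imp (fun h => hinj ?_) (fun h => hinj ?_)
  · rw [Submodule.map_bot]
    exact congrArg Subrepresentation.toSubmodule h
  · rw [Submodule.map_subtype_top]
    exact congrArg Subrepresentation.toSubmodule h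

theorem exists_isIrreducible_le [FiniteDimensional k V] {ρ : Representation k G V}
    {σ : Subrepresentation ρ} (hσ : σ ≠ ⊥) :
    ∃ τ ≤ σ, τ.toRepresentation.IsIrreducible := by
  have : WellFoundedLT (Subrepresentation ρ) :=
    StrictMono.wellFoundedLT (f := Subrepresentation.toSubmodule) fun _ _ h => h
  obtain ⟨τ, hτ, hle⟩ := (eq_bot_or_exists_atom_le σ).resolve_left hσ
  exact ⟨τ, hle, isIrreducible_toRepresentation_of_isAtom hτ⟩

theorem isIrreducible_of_equiv {ρ : Representation k G V} {σ : Representation k G W}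
    (φ : ρ.Equiv σ) (hρ : ρ.IsIrreducible) : σ.IsIrreducible := by
  rw [isIrreducible_iff_submodule] at hρ ⊢
  obtain ⟨hV, hρ⟩ := hρ
  refine ⟨φ.toLinearEquiv.injective.nontrivial, fun U hU => ?_⟩
  have hcomap : ∀ g, ∀ v ∈ U.comap φ.toLinearMap, ρ g v ∈ U.comap φ.toLinearMap := by
    intro g v hv
    simpa [Submodule.mem_comap, φ.toIntertwiningMap.isIntertwining] using hU g _ hv
  have hmap : (U.comap φ.toLinearMap).map φ.toLinearMap = U :=
    Submodule.map_comap_eq_of_surjective φ.toLinearEquiv.surjective U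
  rcases hρ _ hcomap with h | h <;> rw [h] at hmap
  · exact .inl (hmap.symm.trans (Submodule.map_bot _))
  · exact .inr (hmap.symm.trans ((Submodule.map_top _).trans φ.toLinearEquiv.range))

def conj (ρ : Representation k G V) (e : V ≃ₗ[k] W) : Representation k G W :=
  e.conjRingEquiv.toMonoidHom.comp ρ

theorem conj_apply (ρ : Representation k G V) (e : V ≃ₗ[k] W) (g : G) :
    ρ.conj e g = e.conj (ρ g) := rfl

def equivConj (ρ : Representation k G V) (e : V ≃ₗ[k] W) : ρ.Equiv (ρ.conj e) :=
  .mk e fun g => by ext; simp [conj_apply]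

end Monoid

def rightRegular (k G : Type*) [CommSemiring k] [Monoid G] : Representation k G (G → k) where
  toFun g := LinearMap.funLeft k k (· * g)
  map_one' := by ext; simp
  map_mul' _ _ := by ext; simp [mul_assoc]

theorem rightRegular_apply {k G : Type*} [CommSemiring k] [Monoid G] (g : G) (f : G → k) (h : G) :
    rightRegular k G g f h = f (h * g) := rfl

section Group

open Subgroup Module
open scoped commutatorElement

variable {k G V : Type*} [Field k] [Group G] [AddCommGroup V] [Module k V]

def centerEigenspace (ρ : Representation k G V) (φ : center G →* kˣ) : Subrepresentation ρ where
  toSubmodule := ⨅ z : center G, Module.End.eigenspace (ρ z) (φ z)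
  apply_mem_toSubmodule g v hv := by
    simp only [Submodule.mem_iInf, Module.End.mem_eigenspace_iff] at hv ⊢
    intro z
    rw [← Module.End.mul_apply, ← map_mul, ← mem_center_iff.1 z.2 g, map_mul,
      Module.End.mul_apply, hv z, map_smul]

theorem mem_centerEigenspace {ρ : Representation k G V} {φ : center G →* kˣ} {v : V} :
    v ∈ centerEigenspace ρ φ ↔ ∀ z : center G, ρ z v = (φ z : k) • v := by
  change v ∈ ⨅ z : center G, Module.End.eigenspace (ρ z) (φ z) ↔ _
  simp only [Submodule.mem_iInf, Module.End.mem_eigenspace_iff]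

theorem toRepresentation_apply_center {ρ : Representation k G V} {φ : center G →* kˣ}
    {σ : Subrepresentation ρ} (hσ : σ ≤ centerEigenspace ρ φ) (z : center G) :
    σ.toRepresentation z = (φ z : k) • 1 := by
  ext v
  exact mem_centerEigenspace.1 (hσ v.2) z

theorem centerEigenspace_rightRegular_ne_bot (φ : center G →* kˣ) :
    centerEigenspace (rightRegular k G) φ ≠ ⊥ := by
  let f : G → k := fun g => if hg : g ∈ center G then (φ ⟨g, hg⟩ : k) else 0
  have hf : f ∈ centerEigenspace (rightRegular k G) φ := by
    refine mem_centerEigenspace.2 fun z => funext fun g => ?_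
    rw [rightRegular_apply, Pi.smul_apply, smul_eq_mul]
    by_cases hg : g ∈ center G
    · have hgz : g * z ∈ center G := mul_mem hg z.2
      simp only [f, dif_pos hg, dif_pos hgz]
      rw [show (⟨g * z, hgz⟩ : center G) = ⟨g, hg⟩ * z from rfl, map_mul, Units.val_mul, mul_comm]
    · have hgz : g * z ∉ center G := fun h => hg (by simpa using mul_mem h (inv_mem z.2))
      simp only [f, dif_neg hg, dif_neg hgz, mul_zero]
  intro h
  rw [h] at hf
  have h0 : f = 0 := (Submodule.mem_bot k).1 hf
  simpa [f, one_mem] using congrFun h0 1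

variable (k) in
theorem exists_isIrreducible_apply_center_eq_smul [Finite G] (φ : center G →* kˣ) :
    ∃ (n : ℕ) (ρ : Representation k G (Fin n → k)),
      ρ.IsIrreducible ∧ ∀ z : center G, ρ z = (φ z : k) • 1 := by
  obtain ⟨σ, hσ, hirr⟩ := exists_isIrreducible_le (centerEigenspace_rightRegular_ne_bot φ)
  let e := (Module.finBasis k σ.toSubmodule).equivFun
  refine ⟨_, σ.toRepresentation.conj e, isIrreducible_of_equiv (equivConj _ e) hirr, fun z => ?_⟩
  rw [conj_apply, toRepresentation_apply_center hσ, map_smul, Module.End.one_eq_id,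
    LinearEquiv.conj_id, Module.End.one_eq_id]

section Character

variable {ρ : Representation k G V}

theorem character_eq_zero_of_conj_eq_mul {g x c : G} {μ : k} (hc : ρ c = μ • 1) (hμ : μ ≠ 1)
    (hconj : x⁻¹ * g * x = g * c) : ρ.character g = 0 := by
  have hmul : ρ.character (g * c) = μ * ρ.character g := by
    rw [character, map_mul, hc, mul_smul_comm, mul_one, map_smul, smul_eq_mul, character]
  have hinv : ρ.character (g * c) = ρ.character g := by
    rw [← hconj, ← char_conj ρ g x⁻¹, inv_inv]
  have : (μ - 1) * ρ.character g = 0 := by rw [sub_mul, one_mul, ← hmul, hinv, sub_self]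
  exact (mul_eq_zero.1 this).resolve_left (sub_ne_zero.2 hμ)

variable {φ : center G →* kˣ} (hρ : ∀ z : center G, ρ z = (φ z : k) • 1)
include hρ

theorem character_apply_center [FiniteDimensional k V] (z : center G) :
    ρ.character z = φ z * finrank k V := by
  rw [character, hρ, map_smul, LinearMap.trace_one, smul_eq_mul]

theorem character_eq_zero_of_notMem_center (hG : commutator G ≤ center G)
    (hφ : ∀ z : center G, (z : G) ∈ commutator G → φ z = 1 → z = 1) {g : G}
    (hg : g ∉ center G) : ρ.character g = 0 := by
  obtain ⟨x, hx⟩ : ∃ x, x * g ≠ g * x := by simpa [mem_center_iff] using hg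
  have hc : ⁅g⁻¹, x⁻¹⁆ ∈ commutator G :=
    commutator_def G ▸ commutator_mem_commutator (mem_top g⁻¹) (mem_top x⁻¹)
  refine character_eq_zero_of_conj_eq_mul (hρ ⟨_, hG hc⟩) (fun h1 => hx ?_)
    (by group : x⁻¹ * g * x = g * ⁅g⁻¹, x⁻¹⁆)
  have hcomm := commutatorElement_eq_one_iff_mul_comm.1
    (congrArg Subtype.val (hφ _ hc (Units.ext h1)))
  simpa using congrArg (·⁻¹) hcomm

theorem sum_character_mul_character_inv [Fintype G] [FiniteDimensional k V]
    (hvanish : ∀ g ∉ center G, ρ.character g = 0) :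
    ∑ g : G, ρ.character g * ρ.character g⁻¹ =
      Nat.card (center G) * (finrank k V * finrank k V) := by
  have hterm (g : G) : ρ.character g * ρ.character g⁻¹ =
      if g ∈ center G then (finrank k V * finrank k V : k) else 0 := by
    split_ifs with hg
    · lift g to center G using hg
      rw [← Subgroup.coe_inv, character_apply_center hρ, character_apply_center hρ, map_inv,
        mul_mul_mul_comm, Units.mul_inv, one_mul]
    · rw [hvanish g hg, zero_mul]
  simp only [hterm, Finset.sum_ite, Finset.sum_const_zero, add_zero, Finset.sum_const,
    nsmul_eq_mul]
  rw [Nat.card_eq_fintype_card, Fintype.card_subtype]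

theorem finrank_mul_self_eq_index_center [Fintype G] [CharZero k] [IsAlgClosed k]
    [FiniteDimensional k V] [ρ.IsIrreducible] (hvanish : ∀ g ∉ center G, ρ.character g = 0) :
    finrank k V * finrank k V = (center G).index := by
  have : Invertible (Nat.card G : k) := invertibleOfNonzero (Nat.cast_ne_zero.2 Nat.card_pos.ne')
  have hortho := char_orthonormal ρ ρ
  rw [if_pos ⟨Equiv.refl ρ⟩, sum_character_mul_character_inv hρ hvanish,
    ← card_mul_index (center G), Nat.cast_mul] at hortho
  have hZ : (Nat.card (center G) : k) ≠ 0 := Nat.cast_ne_zero.2 Nat.card_pos.ne'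
  have hI : ((center G).index : k) ≠ 0 := Nat.cast_ne_zero.2 index_ne_zero_of_finite
  field_simp at hortho
  rw [← sq]
  exact_mod_cast hortho

end Character

end Group

end Representation

section

open Subgroup

theorem inducedFromCenter_apply (H : Type*) [Group H] [Fintype H] (φ : center H →* ℂˣ) (g : H) :
    inducedFromCenter H φ g =
      if hg : g ∈ center H then (center H).index * (φ ⟨g, hg⟩ : ℂ) else 0 := by
  rw [inducedFromCenter]
  split_ifs with hg
  · have hconj (x : H) : x⁻¹ * g * x = g := by
      rw [mul_assoc, ← mem_center_iff.1 hg x, inv_mul_cancel_left]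
    have hterm (x : H) : (if h : x⁻¹ * g * x ∈ center H then (φ ⟨_, h⟩ : ℂ) else 0) =
        φ ⟨g, hg⟩ := by
      simp only [hconj, dif_pos hg]
    rw [Finset.sum_congr rfl fun x _ => hterm x, Finset.sum_const, Finset.card_univ, nsmul_eq_mul]
    rw [← Nat.card_eq_fintype_card, ← card_mul_index (center H), Nat.cast_mul, mul_assoc,
      inv_mul_cancel_left₀ (Nat.cast_ne_zero.2 Nat.card_pos.ne')]
  · have hout (x : H) : x⁻¹ * g * x ∉ center H := fun h =>
      hg (by simpa [mul_assoc] using Normal.conj_mem inferInstance _ h x)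
    simp [hout]

end

/-- Let `H` be a finite group with `[H,H] ⊆ Z(H)`, `Z = [H,H]`, `χ` a
faithful linear character of `Z` and `m = √|H : Z(H)|`. For every linear character `φ` of
`Z(H)` restricting to `χ` on `Z`, the induced character `φ↑^H` equals `m·τ_φ` for some
irreducible character `τ_φ` of `H` of degree `m`; in particular `m` is a positive
integer. -/
theorem induced_from_center_is_multiple_of_irreducible
    (H : Type*) [Group H] [Fintype H]
    (hHZ : commutator H ≤ Subgroup.center H)
    (χ : ↥(commutator H) →* ℂˣ) (hχ : Function.Injective χ)
    (φ : ↥(Subgroup.center H) →* ℂˣ)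
    (hres : ∀ (z : H) (hz : z ∈ commutator H), φ ⟨z, hHZ hz⟩ = χ ⟨z, hz⟩) :
    ∃ m : ℕ, 0 < m ∧ m * m = (Subgroup.center H).index ∧
      ∃ (n : ℕ) (ρ : Representation ℂ H (Fin n → ℂ)),
        0 < n ∧
        (∀ U : Submodule ℂ (Fin n → ℂ), (∀ g : H, ∀ w ∈ U, ρ g w ∈ U) → U = ⊥ ∨ U = ⊤) ∧
        LinearMap.trace ℂ (Fin n → ℂ) (ρ 1) = (m : ℂ) ∧
        ∀ g : H, inducedFromCenter H φ g = (m : ℂ) * LinearMap.trace ℂ (Fin n → ℂ) (ρ g) := by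
  obtain ⟨n, ρ, hirr, hρ⟩ := Representation.exists_isIrreducible_apply_center_eq_smul ℂ φ
  obtain ⟨hnontriv, hsub⟩ := (Representation.isIrreducible_iff_submodule ρ).1 hirr
  have hfaithful (z : Subgroup.center H) (hz : (z : H) ∈ commutator H) (h1 : φ z = 1) :
      z = 1 := by
    have : χ ⟨z, hz⟩ = χ 1 := by rw [← hres z hz, map_one]; exact h1
    exact Subtype.ext (congrArg Subtype.val (hχ this) : (z : H) = 1)
  have hvanish (g : H) (hg : g ∉ Subgroup.center H) : ρ.character g = 0 :=
    Representation.character_eq_zero_of_notMem_center hρ hHZ hfaithful hg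
  have hsq := Representation.finrank_mul_self_eq_index_center hρ hvanish
  rw [Module.finrank_fin_fun] at hsq
  have hn : 0 < n := by simpa using (Module.finrank_pos : 0 < Module.finrank ℂ (Fin n → ℂ))
  refine ⟨n, hn, hsq, n, ρ, hn, hsub, ρ.char_one.trans (by simp), fun g => ?_⟩
  rw [inducedFromCenter_apply]
  split_ifs with hg
  · rw [← hsq, ← Representation.character,
      show ρ.character g = _ from Representation.character_apply_center hρ ⟨g, hg⟩,
      Module.finrank_fin_fun]
    push_cast
    ring
  · rw [← Representation.character, hvanish g hg, mul_zero]
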